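/- Let U ⊆ ℝ² be open and f : U → ℝ smooth. On U×ℝ² with coordinates (x¹,x²,ξ₁,ξ₂) define the metric g with components g(∂_{ξ_i},∂_{x^j}) = g(∂_{x^j},∂_{ξ_i}) = ½δ_{ij}, g(∂_{x^1},∂_{x^1}) = ξ₁ ∂f/∂x¹, g(∂_{x^2},∂_{x^2}) = −ξ₂ ∂f/∂x², g(∂_{x^1},∂_{x^2}) = 0, g(∂_{ξ_i},∂_{ξ_j}) = 0 (this is the metric g = dξ_i⊙dx^i + ξ₁ f_{x¹}(dx¹)² − ξ₂ f_{x²}(dx²)², the Λ = 0 limit of the Einstein lift of a projective structure admitting a connection with totally skew-symmetric Ricci tensor). Then g is Ricci-flat: Ric(g) = 0 everywhere on U×ℝ². -/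

import Mathlib

noncomputable section
open Matrix

/-- Points of the plane. -/
abbrev Pt2 : Type := Fin 2 → ℝ
/-- Points of the 4-manifold `U × ℝ²`, coordinates `(x¹, x², ξ₁, ξ₂)`. -/
abbrev Pt4 : Type := Fin 4 → ℝ

/-- Partial derivative of a function on the plane. -/
def pd2 (i : Fin 2) (f : Pt2 → ℝ) (x : Pt2) : ℝ := fderiv ℝ f x (Pi.single i 1)
/-- Partial derivative of a function on `ℝ⁴`. -/
def pd4 (a : Fin 4) (f : Pt4 → ℝ) (p : Pt4) : ℝ := fderiv ℝ f p (Pi.single a 1)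

/-- Base point `(x¹,x²)` of a point of `U × ℝ²`. -/
def bpt (p : Pt4) : Pt2 := ![p 0, p 1]

/-- The metric `g = dξ_i⊙dx^i + ξ₁ f_{x¹}(dx¹)² − ξ₂ f_{x²}(dx²)²`, the `Λ = 0`
(Ricci-flat) limit of the Einstein lift for projective structures admitting a
connection with totally skew-symmetric Ricci tensor. -/
def skewLift (f : Pt2 → ℝ) (p : Pt4) : Matrix (Fin 4) (Fin 4) ℝ :=
  !![p 2 * pd2 0 f (bpt p), 0, 1/2, 0;
     0, -(p 3 * pd2 1 f (bpt p)), 0, 1/2;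
     1/2, 0, 0, 0;
     0, 1/2, 0, 0]

/-- Christoffel symbols `Γ^a_{bc} = ½ Σ_d g^{ad}(∂_b g_{dc} + ∂_c g_{bd} − ∂_d g_{bc})`
of a metric on an open subset of `ℝ⁴`. -/
def chris4 (g : Pt4 → Matrix (Fin 4) (Fin 4) ℝ) (a b c : Fin 4) (p : Pt4) : ℝ :=
  (1/2) * ∑ d, (g p)⁻¹ a d *
    (pd4 b (fun q => g q d c) p + pd4 c (fun q => g q b d) p - pd4 d (fun q => g q b c) p)

/-- Ricci tensor `Ric_{bd} = Σ_a ∂_aΓ^a_{bd} − ∂_bΓ^a_{ad} + Σ_{a,c}(Γ^a_{ac}Γ^c_{bd} − Γ^a_{bc}Γ^c_{ad})`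
of a metric on an open subset of `ℝ⁴`. -/
def ric4 (g : Pt4 → Matrix (Fin 4) (Fin 4) ℝ) (b d : Fin 4) (p : Pt4) : ℝ :=
  (∑ a, (pd4 a (fun q => chris4 g a b d q) p - pd4 b (fun q => chris4 g a a d q) p))
    + ∑ a, ∑ c, (chris4 g a a c p * chris4 g c b d p - chris4 g a b c p * chris4 g c a d p)

open scoped ContDiff

def bptL : Pt4 →L[ℝ] Pt2 :=
  ContinuousLinearMap.pi ![ContinuousLinearMap.proj 0, ContinuousLinearMap.proj 1]

lemma bpt_eq : bpt = bptL := by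
  funext q i; fin_cases i <;> simp [bpt, bptL]

lemma contDiff_pd2 {F : Pt2 → ℝ} (hF : ContDiff ℝ ∞ F) (i : Fin 2) :
    ContDiff ℝ ∞ (pd2 i F) :=
  ContDiff.clm_apply (g := fun _ => Pi.single i 1)
    (hF.fderiv_right (m := ∞) (by exact_mod_cast le_rfl)) contDiff_const

lemma diff_bpt {G : Pt2 → ℝ} {p : Pt4} (hG : DifferentiableAt ℝ G (bpt p)) :
    DifferentiableAt ℝ (fun q => G (bpt q)) p := by
  have : (fun q => G (bpt q)) = G ∘ bptL := by rw [bpt_eq]; rfl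
  rw [this]
  exact (bpt_eq ▸ hG : DifferentiableAt ℝ G (bptL p)).comp p bptL.differentiableAt

lemma pd4_bpt {G : Pt2 → ℝ} {p : Pt4} (hG : DifferentiableAt ℝ G (bpt p)) (a : Fin 4) :
    pd4 a (fun q => G (bpt q)) p = ![pd2 0 G (bpt p), pd2 1 G (bpt p), 0, 0] a := by
  have hc : (fun q => G (bpt q)) = G ∘ bptL := by rw [bpt_eq]; rfl
  have hb : bpt p = bptL p := by rw [bpt_eq]
  have h0 : bptL (Pi.single (0:Fin 4) 1) = Pi.single (0:Fin 2) 1 := by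
    funext i; fin_cases i <;> simp [bptL, Pi.single_apply]
  have h1 : bptL (Pi.single (1:Fin 4) 1) = Pi.single (1:Fin 2) 1 := by
    funext i; fin_cases i <;> simp [bptL, Pi.single_apply]
  have h2 : bptL (Pi.single (2:Fin 4) 1) = 0 := by
    funext i; fin_cases i <;> simp [bptL, Pi.single_apply]
  have h3 : bptL (Pi.single (3:Fin 4) 1) = 0 := by
    funext i; fin_cases i <;> simp [bptL, Pi.single_apply]
  rw [pd4, hc, fderiv_comp _ (hb ▸ hG) bptL.differentiableAt, bptL.fderiv]
  fin_cases a <;> simp [h0, h1, h2, h3, pd2, hb]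

lemma pd4_coord (i : Fin 4) (p : Pt4) (a : Fin 4) :
    pd4 a (fun q => q i) p = if i = a then 1 else 0 := by
  have : (fun q : Pt4 => q i) = (ContinuousLinearMap.proj i : Pt4 →L[ℝ] ℝ) := rfl
  rw [pd4, this, ContinuousLinearMap.fderiv]
  simp [Pi.single_apply]

lemma pd4_mul {f g : Pt4 → ℝ} {p : Pt4} (hf : DifferentiableAt ℝ f p)
    (hg : DifferentiableAt ℝ g p) (a : Fin 4) :
    pd4 a (fun q => f q * g q) p = pd4 a f p * g p + f p * pd4 a g p := by
  simp only [pd4, fderiv_fun_mul hf hg]; simp; ring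

lemma pd4_neg (f : Pt4 → ℝ) (p : Pt4) (a : Fin 4) :
    pd4 a (fun q => -(f q)) p = -(pd4 a f p) := by
  simp only [pd4, fderiv_neg]; simp

lemma pd4_add {f g : Pt4 → ℝ} {p : Pt4} (hf : DifferentiableAt ℝ f p)
    (hg : DifferentiableAt ℝ g p) (a : Fin 4) :
    pd4 a (fun q => f q + g q) p = pd4 a f p + pd4 a g p := by
  simp only [pd4, fderiv_fun_add hf hg]; simp

lemma pd4_const (c : ℝ) (p : Pt4) (a : Fin 4) : pd4 a (fun _ => c) p = 0 := by
  simp [pd4]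

open Matrix


def gi (F : Pt2 → ℝ) (q : Pt4) : Matrix (Fin 4) (Fin 4) ℝ :=
  !![0,0,2,0; 0,0,0,2; 2,0,-(4*(q 2)*pd2 0 F (bpt q)),0; 0,2,0,4*(q 3)*pd2 1 F (bpt q)]

lemma skewLift_inv (F : Pt2 → ℝ) (q : Pt4) : (skewLift F q)⁻¹ = gi F q := by
  apply Matrix.inv_eq_right_inv
  ext i j
  fin_cases i <;> fin_cases j <;>
    simp [skewLift, gi, Matrix.mul_apply, Fin.sum_univ_four] <;> ring

lemma diff_coord (i : Fin 4) (p : Pt4) : DifferentiableAt ℝ (fun q : Pt4 => q i) p :=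
  (ContinuousLinearMap.proj (R := ℝ) (φ := fun _ : Fin 4 => ℝ) i).differentiableAt

-- shape lemmas
lemma pd4_xi2 {G : Pt2 → ℝ} {p : Pt4} (hG : DifferentiableAt ℝ G (bpt p)) (a : Fin 4) :
    pd4 a (fun q => q 2 * G (bpt q)) p =
      ![p 2 * pd2 0 G (bpt p), p 2 * pd2 1 G (bpt p), G (bpt p), 0] a := by
  rw [pd4_mul (diff_coord 2 p) (diff_bpt hG), pd4_coord, pd4_bpt hG]
  fin_cases a <;> simp

lemma pd4_xi3 {G : Pt2 → ℝ} {p : Pt4} (hG : DifferentiableAt ℝ G (bpt p)) (a : Fin 4) :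
    pd4 a (fun q => q 3 * G (bpt q)) p =
      ![p 3 * pd2 0 G (bpt p), p 3 * pd2 1 G (bpt p), 0, G (bpt p)] a := by
  rw [pd4_mul (diff_coord 3 p) (diff_bpt hG), pd4_coord, pd4_bpt hG]
  fin_cases a <;> simp



def W1 (F : Pt2 → ℝ) (x : Pt2) : ℝ := pd2 0 (pd2 0 F) x + 2 * pd2 0 F x * pd2 0 F x
def W2 (F : Pt2 → ℝ) (x : Pt2) : ℝ := pd2 1 (pd2 1 F) x - 2 * pd2 1 F x * pd2 1 F x

def Γc (F : Pt2 → ℝ) (a b c : Fin 4) (q : Pt4) : ℝ :=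
  ![![![-(pd2 0 F (bpt q)), 0, 0, 0], ![0,0,0,0], ![0,0,0,0], ![0,0,0,0]],
    ![![0,0,0,0], ![0, pd2 1 F (bpt q), 0, 0], ![0,0,0,0], ![0,0,0,0]],
    ![![q 2 * W1 F (bpt q), q 2 * pd2 1 (pd2 0 F) (bpt q), pd2 0 F (bpt q), 0],
      ![q 2 * pd2 1 (pd2 0 F) (bpt q), q 3 * pd2 0 (pd2 1 F) (bpt q), 0, 0],
      ![pd2 0 F (bpt q), 0, 0, 0], ![0,0,0,0]],
    ![![-(q 2 * pd2 1 (pd2 0 F) (bpt q)), -(q 3 * pd2 0 (pd2 1 F) (bpt q)), 0, 0],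
      ![-(q 3 * pd2 0 (pd2 1 F) (bpt q)), -(q 3 * W2 F (bpt q)), 0, -(pd2 1 F (bpt q))],
      ![0,0,0,0], ![0, -(pd2 1 F (bpt q)), 0, 0]]] a b c

lemma le1inf : (1 : WithTop ℕ∞) ≤ ∞ := by
  exact_mod_cast ENat.natCast_le_of_coe_top_le_withTop le_rfl 1

section
variable {F : Pt2 → ℝ} (hF : ContDiff ℝ ∞ F)
include hF

lemma dF0 (x : Pt2) : DifferentiableAt ℝ (pd2 0 F) x :=
  ((contDiff_pd2 hF 0).differentiable (by simp)).differentiableAt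
lemma dF1 (x : Pt2) : DifferentiableAt ℝ (pd2 1 F) x :=
  ((contDiff_pd2 hF 1).differentiable (by simp)).differentiableAt

set_option maxHeartbeats 2000000 in
set_option maxHeartbeats 2000000 in
lemma chris_eq : chris4 (skewLift F) = Γc F := by
  funext a b c q
  rw [chris4, skewLift_inv, Fin.sum_univ_four]
  fin_cases a <;> fin_cases b <;> fin_cases c <;>
  simp [gi, skewLift, Γc, pd4_const, pd4_neg, pd4_xi2 (dF0 hF (bpt q)),
    pd4_xi3 (dF1 hF (bpt q)), pd4_bpt (dF0 hF (bpt q)), pd4_bpt (dF1 hF (bpt q)), W1, W2] <;>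
  first | rfl | ring

end


lemma le2inf : (2 : WithTop ℕ∞) ≤ ∞ := by
  exact_mod_cast ENat.natCast_le_of_coe_top_le_withTop le_rfl 2

section
variable {F : Pt2 → ℝ} (hF : ContDiff ℝ ∞ F)
include hF

lemma dF01 (x : Pt2) : DifferentiableAt ℝ (pd2 1 (pd2 0 F)) x :=
  ((contDiff_pd2 (contDiff_pd2 hF 0) 1).differentiable (by simp)).differentiableAt
lemma dF10 (x : Pt2) : DifferentiableAt ℝ (pd2 0 (pd2 1 F)) x :=
  ((contDiff_pd2 (contDiff_pd2 hF 1) 0).differentiable (by simp)).differentiableAt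
lemma dW1 (x : Pt2) : DifferentiableAt ℝ (W1 F) x := by
  have h1 := ((contDiff_pd2 (contDiff_pd2 hF 0) 0).differentiable (by simp)).differentiableAt (x := x)
  have h2 := dF0 hF x
  exact h1.add ((differentiableAt_const (2:ℝ)).mul h2 |>.mul h2)
lemma dW2 (x : Pt2) : DifferentiableAt ℝ (W2 F) x := by
  have h1 := ((contDiff_pd2 (contDiff_pd2 hF 1) 1).differentiable (by simp)).differentiableAt (x := x)
  have h2 := dF1 hF x
  exact h1.sub ((differentiableAt_const (2:ℝ)).mul h2 |>.mul h2)

lemma symm2 (x : Pt2) : pd2 0 (pd2 1 F) x = pd2 1 (pd2 0 F) x := by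
  have hd : DifferentiableAt ℝ (fderiv ℝ F) x :=
    ((hF.fderiv_right (m := ∞) (by exact_mod_cast le_rfl)).differentiable (by simp)).differentiableAt
  have key : ∀ i j : Fin 2, pd2 i (pd2 j F) x =
      fderiv ℝ (fderiv ℝ F) x (Pi.single i 1) (Pi.single j 1) := by
    intro i j
    have : pd2 j F = fun y => fderiv ℝ F y (Pi.single j 1) := rfl
    rw [pd2, this, fderiv_clm_apply hd (differentiableAt_const _)]
    simp
  rw [key 0 1, key 1 0]
  exact (hF.contDiffAt.isSymmSndFDerivAt (by simpa using le2inf)).eq _ _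

set_option maxHeartbeats 4000000 in
theorem main_global (p : Pt4) (b d : Fin 4) : ric4 (skewLift F) b d p = 0 := by
  rw [ric4]
  simp only [chris_eq hF, Fin.sum_univ_four]
  fin_cases b <;> fin_cases d <;>
  · simp [Γc, pd4_const, pd4_neg, pd4_bpt (dF0 hF (bpt p)), pd4_bpt (dF1 hF (bpt p)),
      pd4_bpt (dF01 hF (bpt p)), pd4_bpt (dF10 hF (bpt p)), pd4_xi2 (dW1 hF (bpt p)),
      pd4_xi3 (dW2 hF (bpt p)), pd4_xi2 (dF01 hF (bpt p)), pd4_xi3 (dF10 hF (bpt p))]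
    try simp [W1, W2, symm2 hF (bpt p), Matrix.vecHead, Matrix.vecTail]
    try ring

end

-- LOCALITY
lemma pd4_congr {f g : Pt4 → ℝ} {p : Pt4} (h : f =ᶠ[nhds p] g) (a : Fin 4) :
    pd4 a f p = pd4 a g p := by rw [pd4, pd4, h.fderiv_eq]

lemma chris4_congr {g₁ g₂ : Pt4 → Matrix (Fin 4) (Fin 4) ℝ} {p : Pt4}
    (h : g₁ =ᶠ[nhds p] g₂) (a b c : Fin 4) : chris4 g₁ a b c p = chris4 g₂ a b c p := by
  rw [chris4, chris4, h.self_of_nhds]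
  congr 1
  refine Finset.sum_congr rfl fun d _ => ?_
  have e1 : (fun q => g₁ q d c) =ᶠ[nhds p] fun q => g₂ q d c := h.mono fun q hq => by simp only [hq]
  have e2 : (fun q => g₁ q b d) =ᶠ[nhds p] fun q => g₂ q b d := h.mono fun q hq => by simp only [hq]
  have e3 : (fun q => g₁ q b c) =ᶠ[nhds p] fun q => g₂ q b c := h.mono fun q hq => by simp only [hq]
  rw [pd4_congr e1 b, pd4_congr e2 c, pd4_congr e3 d]

lemma chris4_eventually {g₁ g₂ : Pt4 → Matrix (Fin 4) (Fin 4) ℝ} {p : Pt4}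
    (h : g₁ =ᶠ[nhds p] g₂) (a b c : Fin 4) :
    (fun q => chris4 g₁ a b c q) =ᶠ[nhds p] fun q => chris4 g₂ a b c q :=
  h.eventually_nhds.mono fun q hq => chris4_congr hq a b c

lemma ric4_congr {g₁ g₂ : Pt4 → Matrix (Fin 4) (Fin 4) ℝ} {p : Pt4}
    (h : g₁ =ᶠ[nhds p] g₂) (b d : Fin 4) : ric4 g₁ b d p = ric4 g₂ b d p := by
  rw [ric4, ric4]
  congr 1
  · refine Finset.sum_congr rfl fun a _ => ?_
    rw [pd4_congr (chris4_eventually h a b d) a, pd4_congr (chris4_eventually h a a d) b]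
  · refine Finset.sum_congr rfl fun a _ => ?_
    refine Finset.sum_congr rfl fun c _ => ?_
    rw [chris4_congr h a a c, chris4_congr h c b d, chris4_congr h a b c, chris4_congr h c a d]

def bptL' : Pt4 →L[ℝ] Pt2 :=
  ContinuousLinearMap.pi ![ContinuousLinearMap.proj 0, ContinuousLinearMap.proj 1]
lemma bpt_eq' : bpt = bptL' := by funext q i; fin_cases i <;> simp [bpt, bptL']

lemma skewLift_congr {f F : Pt2 → ℝ} {p : Pt4} (h : f =ᶠ[nhds (bpt p)] F) :
    skewLift f =ᶠ[nhds p] skewLift F := by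
  have hcont : ContinuousAt bpt p := by
    rw [bpt_eq']; exact bptL'.continuous.continuousAt
  have h2 : ∀ᶠ q in nhds p, f =ᶠ[nhds (bpt q)] F := hcont.tendsto.eventually h.eventually_nhds
  refine h2.mono fun q hq => ?_
  have e0 : pd2 0 f (bpt q) = pd2 0 F (bpt q) := by rw [pd2, pd2, hq.fderiv_eq]
  have e1 : pd2 1 f (bpt q) = pd2 1 F (bpt q) := by rw [pd2, pd2, hq.fderiv_eq]
  rw [skewLift, skewLift, e0, e1]

-- EXTENSION
lemma exists_ext {U : Set Pt2} (hU : IsOpen U) {f : Pt2 → ℝ} (hf : ContDiffOn ℝ (⊤ : ℕ∞) f U)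
    {x : Pt2} (hx : x ∈ U) : ∃ F : Pt2 → ℝ, ContDiff ℝ ∞ F ∧ f =ᶠ[nhds x] F := by
  obtain ⟨r, hr, hball⟩ := Metric.isOpen_iff.1 hU x hx
  let c : ContDiffBump x := ⟨r/3, r/2, by positivity, by linarith⟩
  refine ⟨fun y => c y * f y, ?_, ?_⟩
  · rw [contDiff_iff_contDiffAt]
    intro y
    by_cases hy : y ∈ Metric.ball x r
    · exact c.contDiffAt.mul ((hf.of_le (by simp)).contDiffAt (hU.mem_nhds (hball hy)))
    · have hyc : y ∈ (Metric.closedBall x (r/2))ᶜ := by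
        intro hyy
        exact hy (Metric.closedBall_subset_ball (by linarith) hyy)
      have hev : ∀ᶠ z in nhds y, c z * f z = 0 := by
        filter_upwards [Metric.isClosed_closedBall.isOpen_compl.mem_nhds hyc] with z hz
        have : c z = 0 := c.zero_of_le_dist (by
          have h1 : r/2 < dist x z := by simpa [Metric.mem_closedBall, dist_comm] using hz
          have h2 : dist z x = dist x z := dist_comm z x
          show c.rOut ≤ dist z x
          show (r/2 : ℝ) ≤ dist z x
          linarith)
        rw [this, zero_mul]
      exact (contDiffAt_const (c := (0:ℝ))).congr_of_eventuallyEq hev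
  · filter_upwards [Metric.ball_mem_nhds x (by positivity : (0:ℝ) < r/3)] with y hy
    rw [c.one_of_mem_closedBall (Metric.ball_subset_closedBall hy), one_mul]

/-- The `Λ = 0` limit of the Einstein lift of a projective structure admitting a
connection with totally skew-symmetric Ricci tensor is Ricci-flat. -/
theorem skewLift_ricciFlat
    (U : Set Pt2) (hUopen : IsOpen U)
    (f : Pt2 → ℝ) (hfsmooth : ContDiffOn ℝ (⊤ : ℕ∞) f U)
    (p : Pt4) (hp : bpt p ∈ U) (b d : Fin 4) :
    ric4 (skewLift f) b d p = 0 := by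
  obtain ⟨F, hF, hfF⟩ := exists_ext hUopen hfsmooth hp
  rw [ric4_congr (skewLift_congr hfF) b d]
  exact main_global hF p b d
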